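/- Let x ≥ 3, σ = √x, and suppose n ≥ 0. Then ∫_{x^{1/2+ε}}^{∞} exp( n log t − ∫_0^t arctan(u/(x+σ)) du ) dt ≪_{n,ε} x^{1/2−ε} exp(−x^{ε} π/16) for any fixed ε ∈ (0, 1/4) and x sufficiently large in terms of n and ε. -/

import Mathlib

open Real MeasureTheory Set Filter
open scoped Nat

/-!
Write `I(t) = ∫₀ᵗ arctan(u/s) du` with `s = x + √x` and `T = x^{1/2+ε} ≤ s`. Since
`arctan v ≥ v/2` on `[0, 1]`, `I(T) ≥ T²/(4s)`, and since the integrand is increasing, `I`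
grows at least with slope `arctan(T/s) ≥ T/(2s)` beyond `T`; together `I(t) ≥ (T/(4s)) t`
for `t ≥ T`.
Absorbing `tⁿ` into half of this exponential decay leaves a tail of size
`n! (8s/T)^{n+1} e^{-T²/(8s)} ≤ n! (16x)^{n+1} e^{-x^{2ε}/16}`, and the Gaussian factor
`e^{-x^{2ε}/16}` beats both the polynomial factor and `e^{-x^ε π/16}` for large `x`.
-/

lemma Real.half_le_arctan {v : ℝ} (h0 : 0 ≤ v) (h1 : v ≤ 1) : v / 2 ≤ arctan v := by
  have hderiv : ∀ u ∈ interior (Icc (0:ℝ) 1), 1 / 2 ≤ deriv arctan u := by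
    intro u hu
    rw [interior_Icc] at hu
    rw [Real.deriv_arctan, div_le_div_iff₀ two_pos (by positivity)]
    nlinarith [hu.1, hu.2]
  have := (convex_Icc (0:ℝ) 1).mul_sub_le_image_sub_of_le_deriv continuous_arctan.continuousOn
    differentiable_arctan.differentiableOn hderiv 0 ⟨le_rfl, zero_le_one⟩ v ⟨h0, h1⟩ h0
  rw [arctan_zero] at this
  linarith

lemma integral_add_mul_sub_le_of_monotone {f : ℝ → ℝ} (hf : Monotone f) (a : ℝ) {b c : ℝ}
    (hbc : b ≤ c) : (∫ u in a..b, f u) + f b * (c - b) ≤ ∫ u in a..c, f u := by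
  have hsplit := intervalIntegral.integral_add_adjacent_intervals
    (hf.intervalIntegrable (μ := volume) (a := a) (b := b))
    (hf.intervalIntegrable (μ := volume) (b := c))
  have hmono : ∫ _ in b..c, f b ≤ ∫ u in b..c, f u :=
    intervalIntegral.integral_mono_on hbc intervalIntegrable_const hf.intervalIntegrable
      fun u hu => hf hu.1
  rw [intervalIntegral.integral_const, smul_eq_mul] at hmono
  linarith

lemma sq_div_four_le_integral_arctan {s t : ℝ} (hs : 0 < s) (ht : 0 ≤ t) (hts : t ≤ s) :
    t ^ 2 / (4 * s) ≤ ∫ u in (0:ℝ)..t, arctan (u / s) := by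
  have hval : ∫ u in (0:ℝ)..t, u / s / 2 = t ^ 2 / (4 * s) := by
    rw [intervalIntegral.integral_div, intervalIntegral.integral_div, integral_id]
    field_simp
    ring
  rw [← hval]
  have hlin : Continuous fun u : ℝ => u / s / 2 := by fun_prop
  have harctan : Continuous fun u => arctan (u / s) := by fun_prop
  refine intervalIntegral.integral_mono_on ht (hlin.intervalIntegrable _ _)
    (harctan.intervalIntegrable _ _) fun u hu => ?_
  exact half_le_arctan (div_nonneg hu.1 hs.le) ((div_le_one hs).2 (hu.2.trans hts))

lemma mul_le_integral_arctan {s T t : ℝ} (hs : 0 < s) (hT : 0 ≤ T) (hTs : T ≤ s)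
    (ht : T ≤ t) :
    T / (4 * s) * t ≤ ∫ u in (0:ℝ)..t, arctan (u / s) := by
  have hslope : T / (2 * s) ≤ arctan (T / s) := by
    simpa only [div_div, mul_comm] using
      half_le_arctan (div_nonneg hT hs.le) ((div_le_one hs).2 hTs)
  have hmono : Monotone fun u => arctan (u / s) :=
    arctan_strictMono.monotone.comp fun _ _ h => div_le_div_of_nonneg_right h hs.le
  calc T / (4 * s) * t ≤ T ^ 2 / (4 * s) + T / (2 * s) * (t - T) := by
        have hgap : T ^ 2 / (4 * s) + T / (2 * s) * (t - T) - T / (4 * s) * t =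
            T / (4 * s) * (t - T) := by
          field_simp
          ring
        linarith [mul_nonneg (by positivity : 0 ≤ T / (4 * s)) (sub_nonneg.2 ht)]
    _ ≤ (∫ u in (0:ℝ)..T, arctan (u / s)) + arctan (T / s) * (t - T) := by
        gcongr
        exact sq_div_four_le_integral_arctan hs hT hTs
    _ ≤ ∫ u in (0:ℝ)..t, arctan (u / s) := integral_add_mul_sub_le_of_monotone hmono 0 ht

lemma pow_le_factorial_div_pow_mul_exp (n : ℕ) {c t : ℝ} (hc : 0 < c) (ht : 0 ≤ t) :
    t ^ n ≤ n ! / c ^ n * exp (c * t) := by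
  have h := Real.pow_div_factorial_le_exp _ (mul_nonneg hc.le ht) n
  calc t ^ n = (c * t) ^ n / n ! * (n ! / c ^ n) := by field_simp; ring
    _ ≤ exp (c * t) * (n ! / c ^ n) := by gcongr
    _ = n ! / c ^ n * exp (c * t) := mul_comm _ _

lemma setIntegral_Ioi_le_of_le_mul_exp {f : ℝ → ℝ} {T B b : ℝ} (hb : 0 < b)
    (hf0 : ∀ t, 0 ≤ f t) (hf : ∀ t ∈ Ioi T, f t ≤ B * exp (-b * t)) :
    ∫ t in Ioi T, f t ≤ B / b * exp (-b * T) := by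
  have hint : IntegrableOn (fun t => B * exp (-b * t)) (Ioi T) :=
    (exp_neg_integrableOn_Ioi T hb).const_mul B
  calc ∫ t in Ioi T, f t ≤ ∫ t in Ioi T, B * exp (-b * t) :=
        integral_mono_of_nonneg (ae_of_all _ hf0) hint
          ((ae_restrict_iff' measurableSet_Ioi).2 (ae_of_all _ hf))
    _ = B / b * exp (-b * T) := by
        rw [integral_const_mul, integral_exp_mul_Ioi (neg_lt_zero.2 hb)]
        field_simp

lemma setIntegral_Ioi_exp_nat_mul_log_sub_le {g : ℝ → ℝ} (n : ℕ) {T c : ℝ} (hT : 0 ≤ T)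
    (hc : 0 < c) (hg : ∀ t ∈ Ioi T, c * t ≤ g t) :
    ∫ t in Ioi T, exp (n * log t - g t) ≤ n ! * (2 / c) ^ (n + 1) * exp (-(c * T / 2)) := by
  have hpt : ∀ t ∈ Ioi T, exp (n * log t - g t) ≤ n ! * (2 / c) ^ n * exp (-(c / 2) * t) := by
    intro t ht
    have ht0 : 0 < t := hT.trans_lt ht
    calc exp (n * log t - g t) = t ^ n * exp (-g t) := by
          rw [sub_eq_add_neg, exp_add, ← log_pow, exp_log (by positivity)]
      _ ≤ n ! / (c / 2) ^ n * exp (c / 2 * t) * exp (-(c * t)) := by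
          gcongr
          · exact pow_le_factorial_div_pow_mul_exp n (half_pos hc) ht0.le
          · exact hg t ht
      _ = n ! * (2 / c) ^ n * exp (-(c / 2) * t) := by
          rw [mul_assoc, ← exp_add, div_pow, div_pow, div_div_eq_mul_div]
          ring_nf
  calc _ ≤ n ! * (2 / c) ^ n / (c / 2) * exp (-(c / 2) * T) :=
        setIntegral_Ioi_le_of_le_mul_exp (half_pos hc) (fun t => (exp_pos _).le) hpt
    _ = _ := by ring_nf

lemma setIntegral_Ioi_exp_nat_mul_log_sub_integral_arctan_le (n : ℕ) {s T : ℝ} (hT : 0 < T)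
    (hTs : T ≤ s) :
    ∫ t in Ioi T, exp (n * log t - ∫ u in (0:ℝ)..t, arctan (u / s)) ≤
      n ! * (8 * s / T) ^ (n + 1) * exp (-(T ^ 2 / (8 * s))) := by
  have hs : 0 < s := hT.trans_le hTs
  have h := setIntegral_Ioi_exp_nat_mul_log_sub_le n hT.le (by positivity : 0 < T / (4 * s))
    fun t ht => mul_le_integral_arctan hs hT.le hTs (le_of_lt ht)
  convert h using 3
  · field_simp
    ring
  · field_simp
    ring

lemma gamma_ratio_tail_le (n : ℕ) {ε x : ℝ} (hε0 : 0 ≤ ε) (hε1 : ε ≤ 1 / 2)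
    (hx : 1 ≤ x) :
    ∫ t in Ioi (x ^ ((1:ℝ) / 2 + ε)),
        exp (n * log t - ∫ u in (0:ℝ)..t, arctan (u / (x + √x))) ≤
      n ! * (16 * x) ^ (n + 1) * exp (-(x ^ ε) ^ 2 / 16) := by
  set T := x ^ ((1:ℝ) / 2 + ε)
  set s := x + √x
  have hx0 : 0 < x := by linarith
  have hT1 : 1 ≤ T := one_le_rpow hx (by linarith)
  have hTx : T ≤ x := rpow_le_self_of_one_le hx (by linarith)
  have hsx : s ≤ 2 * x := by
    have : √x ≤ x := (sqrt_le_left hx0.le).2 (by nlinarith)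
    linarith
  have hTsq : T ^ 2 = x * (x ^ ε) ^ 2 := by
    rw [← rpow_natCast, ← rpow_natCast, ← rpow_mul hx0.le, ← rpow_mul hx0.le,
      ← rpow_one_add' hx0.le (by positivity)]
    norm_num
    ring_nf
  calc _ ≤ n ! * (8 * s / T) ^ (n + 1) * exp (-(T ^ 2 / (8 * s))) :=
        setIntegral_Ioi_exp_nat_mul_log_sub_integral_arctan_le n (by linarith)
          (by linarith [sqrt_nonneg x])
    _ ≤ n ! * (16 * x) ^ (n + 1) * exp (-(x ^ ε) ^ 2 / 16) := by
        gcongr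
        · calc 8 * s / T ≤ 8 * s := div_le_self (by positivity) hT1
            _ ≤ 16 * x := by linarith
        · rw [neg_div, hTsq, neg_le_neg_iff, div_le_div_iff₀ (by norm_num) (by positivity)]
          nlinarith [mul_le_mul_of_nonneg_left hsx (sq_nonneg (x ^ ε))]

lemma eventually_mul_rpow_mul_exp_neg_sq_le (K k : ℝ) :
    ∀ᶠ y in atTop, K * y ^ k * exp (-y ^ 2 / 16) ≤ exp (-y * π / 16) := by
  have hsmall : ∀ᶠ y in atTop, K * (y ^ k * exp (-(1 / 16) * y)) ≤ 1 := by
    have := (tendsto_rpow_mul_exp_neg_mul_atTop_nhds_zero k (1 / 16) (by norm_num)).const_mul K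
    rw [mul_zero] at this
    exact this.eventually (ge_mem_nhds one_pos)
  filter_upwards [hsmall, eventually_ge_atTop (π + 1)] with y hy hyπ
  calc K * y ^ k * exp (-y ^ 2 / 16)
      = K * (y ^ k * exp (-(1 / 16) * y)) * exp (-(y ^ 2 - y) / 16) := by
        rw [mul_assoc K, mul_assoc, mul_assoc, ← exp_add]
        ring_nf
    _ ≤ exp (-(y ^ 2 - y) / 16) := mul_le_of_le_one_left (exp_pos _).le hy
    _ ≤ exp (-y * π / 16) := exp_le_exp.2 (by nlinarith [pi_pos])

/-- Tail bound for the Gamma-ratio integrand: for fixed `n` and `ε ∈ (0,1/4)`,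
with `σ = √x`, for all sufficiently large `x ≥ 3`,
`∫_{x^{1/2+ε}}^∞ exp(n log t − ∫_0^t arctan(u/(x+σ)) du) dt ≪ x^{1/2−ε} e^{−x^ε π/16}`. -/
theorem gamma_ratio_tail_bound (n : ℕ) (ε : ℝ) (hε : 0 < ε) (hε' : ε < 1 / 4) :
    ∃ C x₀ : ℝ, 0 < C ∧ 3 ≤ x₀ ∧ ∀ x : ℝ, x₀ ≤ x →
      (∫ t in Set.Ioi (x ^ ((1:ℝ)/2 + ε)),
          Real.exp ((n : ℝ) * Real.log t -
            ∫ u in (0:ℝ)..t, Real.arctan (u / (x + Real.sqrt x))))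
        ≤ C * x ^ ((1:ℝ)/2 - ε) * Real.exp (-(x ^ ε) * π / 16) := by
  obtain ⟨x₀, hx₀⟩ := eventually_atTop.1 <| (tendsto_rpow_atTop hε).eventually
    (eventually_mul_rpow_mul_exp_neg_sq_le (n ! * 16 ^ (n + 1)) ((n + 1) / ε))
  refine ⟨1, max x₀ 3, one_pos, le_max_right _ _, fun x hx => ?_⟩
  have hx1 : 1 ≤ x := by linarith [le_max_right x₀ 3]
  have hpow : x ^ (n + 1) = (x ^ ε) ^ (((n:ℝ) + 1) / ε) := by
    rw [← rpow_mul (by linarith), mul_div_cancel₀ _ hε.ne', ← rpow_natCast]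
    push_cast
    rfl
  calc _ ≤ n ! * (16 * x) ^ (n + 1) * exp (-(x ^ ε) ^ 2 / 16) :=
        gamma_ratio_tail_le n hε.le (by linarith) hx1
    _ = n ! * 16 ^ (n + 1) * (x ^ ε) ^ (((n:ℝ) + 1) / ε) * exp (-(x ^ ε) ^ 2 / 16) := by
        rw [mul_pow, ← hpow]
        ring
    _ ≤ exp (-(x ^ ε) * π / 16) := hx₀ x (le_of_max_le_left hx)
    _ ≤ 1 * x ^ ((1:ℝ) / 2 - ε) * exp (-(x ^ ε) * π / 16) := by
        rw [one_mul]
        exact le_mul_of_one_le_left (exp_pos _).le (one_le_rpow hx1 (by linarith))
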